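/- For every integer k ≥ 2, the monomial q^{k²}x^k lies in the ideal of A generated by {q^{i²}x^i : 1 ≤ i ≤ k} but not in the ideal generated by {q^{i²}x^i : 1 ≤ i ≤ k−1}. Consequently the chain of ideals I_k = (q^{i²}x^i : 1 ≤ i ≤ k) of A is strictly increasing. -/

import Mathlib

open MvPolynomial

/-- The monomial subalgebra `K[q^{a²} x^a : a ∈ ℕ]` of `K[q,x]`,
where `q = X 0` and `x = X 1`. -/
noncomputable def weightedSubalgebra (K : Type*) [Field K] :
    Subalgebra K (MvPolynomial (Fin 2) K) :=
  Algebra.adjoin K { p | ∃ a : ℕ, p = X 0 ^ (a ^ 2) * X 1 ^ a }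

/-- The element `q^{a²} x^a` of the monomial subalgebra. -/
noncomputable def genElem (K : Type*) [Field K] (a : ℕ) : weightedSubalgebra K :=
  ⟨X 0 ^ (a ^ 2) * X 1 ^ a, Algebra.subset_adjoin ⟨a, rfl⟩⟩

/-- The ideal `I_k = (q^{i²} x^i : 1 ≤ i ≤ k)` of the monomial subalgebra. -/
noncomputable def idealI (K : Type*) [Field K] (k : ℕ) : Ideal (weightedSubalgebra K) :=
  Ideal.span ((fun i => genElem K i) '' { i | 1 ≤ i ∧ i ≤ k })

/-!
Every monomial `q^m x^n` of `A` satisfies `m ≤ n²`, and since `(i + j)² > i² + j²` for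
`i, j ≥ 1`, a product of generators reaches `m = n²` only if it is a single generator. So every
monomial `q^m x^n` of an element of `I_k` has `m < n²`, or `m = n²` and `1 ≤ n ≤ k`; in particular
`q^{k²} x^k ∉ I_{k-1}`.
-/

open scoped Pointwise

namespace MvPolynomial

variable {σ : Type*} (R : Type*) [CommSemiring R]

lemma mul_mem_restrictSupport {s t : Set (σ →₀ ℕ)} {p q : MvPolynomial σ R}
    (hp : p ∈ restrictSupport R s) (hq : q ∈ restrictSupport R t) :
    p * q ∈ restrictSupport R (s + t) :=
  restrictSupport_add R s t ▸ Submodule.mul_mem_mul hp hq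

noncomputable def restrictSupportSubalgebra (S : AddSubmonoid (σ →₀ ℕ)) :
    Subalgebra R (MvPolynomial σ R) :=
  (restrictSupport R (S : Set (σ →₀ ℕ))).toSubalgebra
    ((monomial_mem_restrictSupport (R := R)).2 (.inl S.zero_mem))
    fun _ _ hp hq => restrictSupport_mono R (Set.add_subset_iff.2 fun _ hu _ hv => S.add_mem hu hv)
      (mul_mem_restrictSupport R hp hq)

lemma mem_restrictSupportSubalgebra {S : AddSubmonoid (σ →₀ ℕ)} {p : MvPolynomial σ R} :
    p ∈ restrictSupportSubalgebra R S ↔ p ∈ restrictSupport R (S : Set (σ →₀ ℕ)) :=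
  .rfl

lemma coe_mem_restrictSupport_of_mem_span {A : Subalgebra R (MvPolynomial σ R)}
    {s t : Set (σ →₀ ℕ)} (hA : ∀ a : A, (a : MvPolynomial σ R) ∈ restrictSupport R s)
    (hst : s + t ⊆ t) {G : Set A} (hG : ∀ g ∈ G, (g : MvPolynomial σ R) ∈ restrictSupport R t)
    {x : A} (hx : x ∈ Ideal.span G) : (x : MvPolynomial σ R) ∈ restrictSupport R t := by
  induction hx using Submodule.span_induction with
  | mem g hg => exact hG g hg
  | zero => exact zero_mem _
  | add _ _ _ _ hx hy => exact add_mem hx hy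
  | smul a _ _ hx => exact restrictSupport_mono R hst (mul_mem_restrictSupport R (hA a) hx)

end MvPolynomial

def subSquareExponents : AddSubmonoid (Fin 2 →₀ ℕ) where
  carrier := {d | d 0 ≤ d 1 ^ 2}
  zero_mem' := by simp
  add_mem' {u v} hu hv := by
    simp only [Set.mem_ofPred_eq, Finsupp.add_apply] at *
    nlinarith [add_sq (u 1) (v 1)]

def idealExponents (k : ℕ) : Set (Fin 2 →₀ ℕ) :=
  {d | d 0 < d 1 ^ 2 ∨ d 0 = d 1 ^ 2 ∧ 1 ≤ d 1 ∧ d 1 ≤ k}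

lemma subSquareExponents_add_idealExponents_subset (k : ℕ) :
    (subSquareExponents : Set (Fin 2 →₀ ℕ)) + idealExponents k ⊆ idealExponents k := by
  refine Set.add_subset_iff.2 fun u (hu : u 0 ≤ u 1 ^ 2) v hv => ?_
  simp only [idealExponents, Set.mem_ofPred_eq, Finsupp.add_apply] at hv ⊢
  have hsq := add_sq (u 1) (v 1)
  rcases hv with hv | ⟨hv, hv1, hvk⟩
  · left; nlinarith
  · rcases Nat.eq_zero_or_pos (u 1) with hu1 | hu1
    · right
      simp only [hu1, zero_pow two_ne_zero, Nat.le_zero, zero_add] at hu ⊢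
      omega
    · left; nlinarith [Nat.mul_pos hu1 hv1]

lemma X_pow_mul_X_pow_mem_restrictSupport {R : Type*} [CommSemiring R] [Nontrivial R]
    {s : Set (Fin 2 →₀ ℕ)} (m n : ℕ) :
    (X 0 ^ m * X 1 ^ n : MvPolynomial (Fin 2) R) ∈ restrictSupport R s ↔
      Finsupp.single 0 m + Finsupp.single 1 n ∈ s := by
  rw [X_pow_eq_monomial, X_pow_eq_monomial, monomial_mul, one_mul, monomial_mem_restrictSupport]
  simp

lemma weightedSubalgebra_le (K : Type*) [Field K] :
    weightedSubalgebra K ≤ restrictSupportSubalgebra K subSquareExponents := by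
  refine Algebra.adjoin_le ?_
  rintro _ ⟨a, rfl⟩
  simp [mem_restrictSupportSubalgebra, X_pow_mul_X_pow_mem_restrictSupport, subSquareExponents]

lemma coe_mem_restrictSupport_of_mem_idealI (K : Type*) [Field K] {k : ℕ}
    {x : weightedSubalgebra K} (hx : x ∈ idealI K k) :
    (x : MvPolynomial (Fin 2) K) ∈ restrictSupport K (idealExponents k) := by
  refine coe_mem_restrictSupport_of_mem_span K (fun a => weightedSubalgebra_le K a.2)
    (subSquareExponents_add_idealExponents_subset k) ?_ hx
  rintro _ ⟨i, ⟨hi1, hik⟩, rfl⟩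
  simp [genElem, X_pow_mul_X_pow_mem_restrictSupport, idealExponents, hi1, hik]

lemma genElem_mem_idealI (K : Type*) [Field K] {a k : ℕ} (ha : 1 ≤ a) (hak : a ≤ k) :
    genElem K a ∈ idealI K k :=
  Ideal.subset_span ⟨a, ⟨ha, hak⟩, rfl⟩

lemma genElem_notMem_idealI (K : Type*) [Field K] {a k : ℕ} (hka : k < a) :
    genElem K a ∉ idealI K k := fun h => by
  simpa [genElem, X_pow_mul_X_pow_mem_restrictSupport, idealExponents, hka.not_ge] using
    coe_mem_restrictSupport_of_mem_idealI K h

lemma idealI_mono (K : Type*) [Field K] : Monotone (idealI K) := fun _ _ hkl =>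
  Ideal.span_mono (Set.image_mono fun _ hi => ⟨hi.1, hi.2.trans hkl⟩)

theorem stmt_5 (K : Type*) [Field K] (k : ℕ) (hk : 2 ≤ k) :
    genElem K k ∈ idealI K k ∧ genElem K k ∉ idealI K (k - 1) ∧
    idealI K (k - 1) < idealI K k := by
  have hmem : genElem K k ∈ idealI K k := genElem_mem_idealI K (by omega) le_rfl
  have hnotMem : genElem K k ∉ idealI K (k - 1) := genElem_notMem_idealI K (by omega)
  exact ⟨hmem, hnotMem,
    SetLike.lt_iff_le_and_exists.2 ⟨idealI_mono K (Nat.sub_le k 1), _, hmem, hnotMem⟩⟩
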